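/- Let 𝒴 ⊂ ℝ be a finite set, let 𝒜, 𝒢₁, ℬ₁, 𝒢₂ be finite types, let p be a strictly positive probability mass function on 𝒴 × 𝒜 × 𝒢₁ × ℬ₁ × 𝒢₂, and fix a ∈ 𝒜. If Y ⊥ B₁ | (A, G₁, G₂) under p, then for all (y, a′, g₁, g₂): ∑_{b₁} p(b₁ | Y=y, A=a′, G₁=g₁, G₂=g₂) · ψ_a^{(G₁,B₁),G₂}(y,a′,g₁,b₁,g₂) = ψ_a^{G₁,G₂}(y,a′,g₁,g₂); that is, the conditional expectation of the influence function for the adjustment set ((G₁,B₁),G₂) given (Y,A,G₁,G₂) equals the influence function for the adjustment set (G₁,G₂). -/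

import Mathlib

open Finset

noncomputable section

variable {Y : Finset ℝ} {A G₁ B₁ G₂ : Type}
variable [Fintype A] [Fintype G₁] [Fintype B₁] [Fintype G₂] [DecidableEq A]

/-- Marginal `p(g₁)`. -/
def pG1 (p : Y × A × G₁ × B₁ × G₂ → ℝ) (g₁ : G₁) : ℝ :=
  ∑ y : Y, ∑ a : A, ∑ b₁ : B₁, ∑ g₂ : G₂, p (y, a, g₁, b₁, g₂)

/-- Marginal `p(b₁)`. -/
def pB1 (p : Y × A × G₁ × B₁ × G₂ → ℝ) (b₁ : B₁) : ℝ :=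
  ∑ y : Y, ∑ a : A, ∑ g₁ : G₁, ∑ g₂ : G₂, p (y, a, g₁, b₁, g₂)

/-- Marginal `p(g₂)`. -/
def pG2 (p : Y × A × G₁ × B₁ × G₂ → ℝ) (g₂ : G₂) : ℝ :=
  ∑ y : Y, ∑ a : A, ∑ g₁ : G₁, ∑ b₁ : B₁, p (y, a, g₁, b₁, g₂)

/-- Marginal `p(g₁, b₁)`. -/
def pG1B1 (p : Y × A × G₁ × B₁ × G₂ → ℝ) (g₁ : G₁) (b₁ : B₁) : ℝ :=
  ∑ y : Y, ∑ a : A, ∑ g₂ : G₂, p (y, a, g₁, b₁, g₂)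

/-- Marginal `p(a, b₁, g₂)`. -/
def pAB1G2 (p : Y × A × G₁ × B₁ × G₂ → ℝ) (a : A) (b₁ : B₁) (g₂ : G₂) : ℝ :=
  ∑ y : Y, ∑ g₁ : G₁, p (y, a, g₁, b₁, g₂)

/-- Marginal `p(a, g₁, b₁, g₂)`. -/
def pAG1B1G2 (p : Y × A × G₁ × B₁ × G₂ → ℝ) (a : A) (g₁ : G₁) (b₁ : B₁) (g₂ : G₂) : ℝ :=
  ∑ y : Y, p (y, a, g₁, b₁, g₂)

/-- Marginal `p(a, g₁, g₂)`. -/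
def pAG1G2 (p : Y × A × G₁ × B₁ × G₂ → ℝ) (a : A) (g₁ : G₁) (g₂ : G₂) : ℝ :=
  ∑ y : Y, ∑ b₁ : B₁, p (y, a, g₁, b₁, g₂)

/-- Outcome regression `m_B(b₁,g₂) = ∑_y y·p(y | a, b₁, g₂)` for the
adjustment set `(B₁, G₂)`. -/
def mB (p : Y × A × G₁ × B₁ × G₂ → ℝ) (a : A) (b₁ : B₁) (g₂ : G₂) : ℝ :=
  ∑ y : Y, (y : ℝ) * ((∑ g₁ : G₁, p (y, a, g₁, b₁, g₂)) / pAB1G2 p a b₁ g₂)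

/-- Outcome regression `m_{GB}(g₁,b₁,g₂) = ∑_y y·p(y | a, g₁, b₁, g₂)` for
the adjustment set `((G₁, B₁), G₂)`. -/
def mGB (p : Y × A × G₁ × B₁ × G₂ → ℝ) (a : A) (g₁ : G₁) (b₁ : B₁) (g₂ : G₂) : ℝ :=
  ∑ y : Y, (y : ℝ) * (p (y, a, g₁, b₁, g₂) / pAG1B1G2 p a g₁ b₁ g₂)

/-- Outcome regression `m_{GG}(g₁,g₂) = ∑_y y·p(y | a, g₁, g₂)` for the
adjustment set `(G₁, G₂)`. -/
def mGG (p : Y × A × G₁ × B₁ × G₂ → ℝ) (a : A) (g₁ : G₁) (g₂ : G₂) : ℝ :=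
  ∑ y : Y, (y : ℝ) * ((∑ b₁ : B₁, p (y, a, g₁, b₁, g₂)) / pAG1G2 p a g₁ g₂)

/-- Target parameter for the adjustment set `(B₁, G₂)`. -/
def TB (p : Y × A × G₁ × B₁ × G₂ → ℝ) (a : A) : ℝ :=
  ∑ b₁ : B₁, pB1 p b₁ * ∑ g₂ : G₂, pG2 p g₂ * mB p a b₁ g₂

/-- Target parameter for the adjustment set `((G₁, B₁), G₂)`. -/
def TGB (p : Y × A × G₁ × B₁ × G₂ → ℝ) (a : A) : ℝ :=
  ∑ g₁ : G₁, ∑ b₁ : B₁, pG1B1 p g₁ b₁ * ∑ g₂ : G₂, pG2 p g₂ * mGB p a g₁ b₁ g₂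

/-- Target parameter for the adjustment set `(G₁, G₂)`. -/
def TGG (p : Y × A × G₁ × B₁ × G₂ → ℝ) (a : A) : ℝ :=
  ∑ g₁ : G₁, pG1 p g₁ * ∑ g₂ : G₂, pG2 p g₂ * mGG p a g₁ g₂

/-- Influence function `ψ_a^{B₁,G₂}` for the adjustment set `(B₁, G₂)`. -/
def psiB (p : Y × A × G₁ × B₁ × G₂ → ℝ) (a : A)
    (y : Y) (a' : A) (b₁ : B₁) (g₂ : G₂) : ℝ :=
  (if a' = a then (1 : ℝ) else 0) * (pB1 p b₁ * pG2 p g₂ / pAB1G2 p a b₁ g₂) *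
      ((y : ℝ) - mB p a b₁ g₂)
    + (∑ g₂' : G₂, pG2 p g₂' * mB p a b₁ g₂')
    + (∑ b₁' : B₁, pB1 p b₁' * mB p a b₁' g₂)
    - 2 * TB p a

/-- Influence function `ψ_a^{(G₁,B₁),G₂}` for the adjustment set `((G₁, B₁), G₂)`. -/
def psiGB (p : Y × A × G₁ × B₁ × G₂ → ℝ) (a : A)
    (y : Y) (a' : A) (g₁ : G₁) (b₁ : B₁) (g₂ : G₂) : ℝ :=
  (if a' = a then (1 : ℝ) else 0) *
      (pG1B1 p g₁ b₁ * pG2 p g₂ / pAG1B1G2 p a g₁ b₁ g₂) *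
      ((y : ℝ) - mGB p a g₁ b₁ g₂)
    + (∑ g₂' : G₂, pG2 p g₂' * mGB p a g₁ b₁ g₂')
    + (∑ g₁' : G₁, ∑ b₁' : B₁, pG1B1 p g₁' b₁' * mGB p a g₁' b₁' g₂)
    - 2 * TGB p a

/-- Influence function `ψ_a^{G₁,G₂}` for the adjustment set `(G₁, G₂)`. -/
def psiGG (p : Y × A × G₁ × B₁ × G₂ → ℝ) (a : A)
    (y : Y) (a' : A) (g₁ : G₁) (g₂ : G₂) : ℝ :=
  (if a' = a then (1 : ℝ) else 0) * (pG1 p g₁ * pG2 p g₂ / pAG1G2 p a g₁ g₂) *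
      ((y : ℝ) - mGG p a g₁ g₂)
    + (∑ g₂' : G₂, pG2 p g₂' * mGG p a g₁ g₂')
    + (∑ g₁' : G₁, pG1 p g₁' * mGG p a g₁' g₂)
    - 2 * TGG p a

/-- Conditional independence `G₁ ⊥ (A, G₂) | B₁` under `p`. -/
def CI_G1_AG2_B1 (p : Y × A × G₁ × B₁ × G₂ → ℝ) : Prop :=
  ∀ (g₁ : G₁) (a : A) (g₂ : G₂) (b₁ : B₁),
    (∑ y : Y, p (y, a, g₁, b₁, g₂)) / pB1 p b₁ =
      (pG1B1 p g₁ b₁ / pB1 p b₁) * (pAB1G2 p a b₁ g₂ / pB1 p b₁)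

/-- Conditional independence `Y ⊥ B₁ | (A, G₁, G₂)` under `p`. -/
def CI_Y_B1_AG1G2 (p : Y × A × G₁ × B₁ × G₂ → ℝ) : Prop :=
  ∀ (y : Y) (a : A) (g₁ : G₁) (b₁ : B₁) (g₂ : G₂),
    p (y, a, g₁, b₁, g₂) / pAG1G2 p a g₁ g₂ =
      ((∑ b₁' : B₁, p (y, a, g₁, b₁', g₂)) / pAG1G2 p a g₁ g₂) *
        (pAG1B1G2 p a g₁ b₁ g₂ / pAG1G2 p a g₁ g₂)

/-- Variance of a real function of the observation under `p`. -/
def VarP (p : Y × A × G₁ × B₁ × G₂ → ℝ) (f : Y × A × G₁ × B₁ × G₂ → ℝ) : ℝ :=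
  (∑ o : Y × A × G₁ × B₁ × G₂, p o * f o ^ 2) -
    (∑ o : Y × A × G₁ × B₁ × G₂, p o * f o) ^ 2

/-!
Given `(A, G₁, G₂)`, the outcome `Y` is independent of the mediator `B₁`, so the outcome
regression `m_{(G₁,B₁),G₂}` does not depend on `b₁` and equals `m_{G₁,G₂}`; hence the
target parameters agree and the plug-in parts of the two influence functions coincide.
What is left is the inverse-probability weight: conditionally on `(Y, A, G₁, G₂)` the law
of `B₁` is `p(b₁ | a, g₁, g₂)`, and averaging `p(g₁, b₁) / p(a, g₁, b₁, g₂)` over it gives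
`p(g₁) / p(a, g₁, g₂)`.
-/

lemma sum_mul_add_of_sum_eq_one {ι : Type*} [Fintype ι] {w : ι → ℝ} (hw : ∑ i, w i = 1)
    (r : ι → ℝ) (c K : ℝ) :
    ∑ i, w i * (c * r i + K) = c * ∑ i, w i * r i + K := by
  simp only [mul_add, Finset.sum_add_distrib, ← Finset.sum_mul, hw, one_mul, Finset.mul_sum]
  congr 1
  exact Finset.sum_congr rfl fun _ _ => by ring

section

variable (p : Y × A × G₁ × B₁ × G₂ → ℝ)

lemma pAG1B1G2_pos (hpos : ∀ o, 0 < p o) [Nonempty Y] (a : A) (g₁ : G₁) (b₁ : B₁) (g₂ : G₂) :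
    0 < pAG1B1G2 p a g₁ b₁ g₂ :=
  Finset.sum_pos (fun _ _ => hpos _) Finset.univ_nonempty

lemma pAG1G2_pos (hpos : ∀ o, 0 < p o) [Nonempty Y] [Nonempty B₁] (a : A) (g₁ : G₁) (g₂ : G₂) :
    0 < pAG1G2 p a g₁ g₂ :=
  Finset.sum_pos (fun _ _ => Finset.sum_pos (fun _ _ => hpos _) Finset.univ_nonempty)
    Finset.univ_nonempty

lemma sum_pG1B1 (g₁ : G₁) : ∑ b₁ : B₁, pG1B1 p g₁ b₁ = pG1 p g₁ := by
  unfold pG1 pG1B1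
  rw [Finset.sum_comm]
  exact Finset.sum_congr rfl fun _ _ => Finset.sum_comm

variable {p}

lemma CI_Y_B1_AG1G2.mul_pAG1G2_eq (hpos : ∀ o, 0 < p o) (hCI : CI_Y_B1_AG1G2 p)
    (y : Y) (a : A) (g₁ : G₁) (b₁ : B₁) (g₂ : G₂) :
    p (y, a, g₁, b₁, g₂) * pAG1G2 p a g₁ g₂ =
      (∑ b₁' : B₁, p (y, a, g₁, b₁', g₂)) * pAG1B1G2 p a g₁ b₁ g₂ := by
  have : Nonempty Y := ⟨y⟩
  have : Nonempty B₁ := ⟨b₁⟩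
  have hD := (pAG1G2_pos p hpos a g₁ g₂).ne'
  have h := hCI y a g₁ b₁ g₂
  field_simp at h
  exact h

lemma CI_Y_B1_AG1G2.condY_eq (hpos : ∀ o, 0 < p o) (hCI : CI_Y_B1_AG1G2 p)
    (y : Y) (a : A) (g₁ : G₁) (b₁ : B₁) (g₂ : G₂) :
    p (y, a, g₁, b₁, g₂) / pAG1B1G2 p a g₁ b₁ g₂ =
      (∑ b₁' : B₁, p (y, a, g₁, b₁', g₂)) / pAG1G2 p a g₁ g₂ := by
  have : Nonempty Y := ⟨y⟩
  have : Nonempty B₁ := ⟨b₁⟩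
  rw [div_eq_div_iff (pAG1B1G2_pos p hpos a g₁ b₁ g₂).ne' (pAG1G2_pos p hpos a g₁ g₂).ne']
  exact hCI.mul_pAG1G2_eq hpos y a g₁ b₁ g₂

lemma CI_Y_B1_AG1G2.condB1_eq (hpos : ∀ o, 0 < p o) (hCI : CI_Y_B1_AG1G2 p)
    (y : Y) (a : A) (g₁ : G₁) (b₁ : B₁) (g₂ : G₂) :
    p (y, a, g₁, b₁, g₂) / (∑ b₁' : B₁, p (y, a, g₁, b₁', g₂)) =
      pAG1B1G2 p a g₁ b₁ g₂ / pAG1G2 p a g₁ g₂ := by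
  have : Nonempty Y := ⟨y⟩
  have : Nonempty B₁ := ⟨b₁⟩
  have hS : 0 < ∑ b₁' : B₁, p (y, a, g₁, b₁', g₂) :=
    Finset.sum_pos (fun _ _ => hpos _) Finset.univ_nonempty
  rw [div_eq_div_iff hS.ne' (pAG1G2_pos p hpos a g₁ g₂).ne', mul_comm (pAG1B1G2 p a g₁ b₁ g₂)]
  exact hCI.mul_pAG1G2_eq hpos y a g₁ b₁ g₂

lemma CI_Y_B1_AG1G2.mGB_eq_mGG (hpos : ∀ o, 0 < p o) (hCI : CI_Y_B1_AG1G2 p)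
    (a : A) (g₁ : G₁) (b₁ : B₁) (g₂ : G₂) :
    mGB p a g₁ b₁ g₂ = mGG p a g₁ g₂ :=
  Finset.sum_congr rfl fun y _ => by rw [hCI.condY_eq hpos]

lemma CI_Y_B1_AG1G2.TGB_eq_TGG (hpos : ∀ o, 0 < p o) (hCI : CI_Y_B1_AG1G2 p) (a : A) :
    TGB p a = TGG p a := by
  unfold TGB TGG
  simp only [hCI.mGB_eq_mGG hpos, ← Finset.sum_mul, sum_pG1B1]

lemma CI_Y_B1_AG1G2.psiGB_eq (hpos : ∀ o, 0 < p o) (hCI : CI_Y_B1_AG1G2 p) (a : A)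
    (y : Y) (a' : A) (g₁ : G₁) (b₁ : B₁) (g₂ : G₂) :
    psiGB p a y a' g₁ b₁ g₂ =
      (if a' = a then (1 : ℝ) else 0) * ((y : ℝ) - mGG p a g₁ g₂) *
          (pG1B1 p g₁ b₁ * pG2 p g₂ / pAG1B1G2 p a g₁ b₁ g₂)
        + ((∑ g₂' : G₂, pG2 p g₂' * mGG p a g₁ g₂')
          + (∑ g₁' : G₁, pG1 p g₁' * mGG p a g₁' g₂) - 2 * TGG p a) := by
  unfold psiGB
  simp only [hCI.mGB_eq_mGG hpos, hCI.TGB_eq_TGG hpos, ← Finset.sum_mul, sum_pG1B1]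
  ring

lemma CI_Y_B1_AG1G2.sum_condB1_mul_ipw (hpos : ∀ o, 0 < p o) (hCI : CI_Y_B1_AG1G2 p)
    (y : Y) (a : A) (g₁ : G₁) (g₂ : G₂) :
    ∑ b₁ : B₁, p (y, a, g₁, b₁, g₂) / (∑ b₁' : B₁, p (y, a, g₁, b₁', g₂)) *
        (pG1B1 p g₁ b₁ * pG2 p g₂ / pAG1B1G2 p a g₁ b₁ g₂) =
      pG1 p g₁ * pG2 p g₂ / pAG1G2 p a g₁ g₂ := by
  have : Nonempty Y := ⟨y⟩
  calc _ = ∑ b₁ : B₁, pG1B1 p g₁ b₁ * pG2 p g₂ / pAG1G2 p a g₁ g₂ :=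
        Finset.sum_congr rfl fun b₁ _ => by
          have hQ := (pAG1B1G2_pos p hpos a g₁ b₁ g₂).ne'
          rw [hCI.condB1_eq hpos]
          field_simp
    _ = _ := by rw [← Finset.sum_div, ← Finset.sum_mul, sum_pG1B1]

end

/-- Projection identity in the proof of Lemma 4.4 (deletion of
overadjustment mediator variables): under `Y ⊥ B₁ | (A, G₁, G₂)`, the
conditional expectation of `ψ_a^{(G₁,B₁),G₂}` given `(Y, A, G₁, G₂)`
equals `ψ_a^{G₁,G₂}`. -/
theorem psi_projection_mediator
    (p : Y × A × G₁ × B₁ × G₂ → ℝ)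
    (hpos : ∀ o, 0 < p o) (hsum : ∑ o, p o = 1) (a : A)
    (hCI : CI_Y_B1_AG1G2 p) :
    ∀ (y : Y) (a' : A) (g₁ : G₁) (g₂ : G₂),
      ∑ b₁ : B₁,
        (p (y, a', g₁, b₁, g₂) / (∑ b₁' : B₁, p (y, a', g₁, b₁', g₂))) *
          psiGB p a y a' g₁ b₁ g₂ =
        psiGG p a y a' g₁ g₂ := by
  intro y a' g₁ g₂
  have : Nonempty B₁ :=
    (Finset.univ_nonempty_iff.mp (Finset.nonempty_of_sum_ne_zero (hsum ▸ one_ne_zero))).map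
      (·.2.2.2.1)
  have hw : ∑ b₁ : B₁, p (y, a', g₁, b₁, g₂) / (∑ b₁' : B₁, p (y, a', g₁, b₁', g₂)) = 1 := by
    rw [← Finset.sum_div, div_self (Finset.sum_pos (fun _ _ => hpos _) Finset.univ_nonempty).ne']
  simp only [hCI.psiGB_eq hpos]
  rw [sum_mul_add_of_sum_eq_one hw]
  unfold psiGG
  split_ifs with ha
  · subst ha
    rw [hCI.sum_condB1_mul_ipw hpos]
    ring
  · ring

end
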